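/- Let φ : Ω → ℝ be a continuous function with the extensibility property, γ^φ its associated Gibbsian specification, and φ_{γ^φ} the potential associated with γ^φ. Then φ_{γ^φ} is weakly cohomologous to φ: for every S-invariant Borel probability measure τ on Ω, ∫ φ_{γ^φ} dτ = ∫ φ dτ − φ(𝐚), where 𝐚 is the constant configuration with symbol a at every site. -/

import Mathlib

open Filter Topology MeasureTheory

namespace GP

/-- The configuration space `Ω = E^ℤ`. -/
abbrev Conf (E : Type*) := ℤ → E

variable {E : Type*}

/-- The shift by `i`: `(shiftZ i ω) k = ω (k + i)`.  The left shift `S` is `shiftZ 1`. -/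
def shiftZ (i : ℤ) (ω : Conf E) : Conf E := fun k => ω (k + i)

/-- The cylinder set determined by a word `w ∈ E^n` (placed on coordinates `0,…,n-1`). -/
def cylW {n : ℕ} (w : Fin n → E) : Set (Conf E) := {ω | ∀ j : Fin n, ω ((j : ℕ) : ℤ) = w j}

/-- The cylinder set `[ω_0^{n-1}]`. -/
def cylPt (ω : Conf E) (n : ℕ) : Set (Conf E) :=
  {ω' | ∀ j : ℕ, j < n → ω' (j : ℤ) = ω (j : ℤ)}

/-- Birkhoff sum `S_n φ = ∑_{k=0}^{n-1} φ ∘ S^k`. -/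
def birk (φ : Conf E → ℝ) (n : ℕ) (ω : Conf E) : ℝ :=
  ∑ k ∈ Finset.range n, φ (shiftZ (k : ℤ) ω)

/-- Topological pressure of `φ` on the full shift:
`P(φ) = lim_n (1/n) log ∑_{w ∈ E^n} sup_{ω ∈ [w]} exp (S_n φ (ω))`
(the limit exists; we use `limsup` as the defining expression). -/
noncomputable def press [Fintype E] (φ : Conf E → ℝ) : ℝ :=
  Filter.limsup (fun n : ℕ =>
    Real.log (∑ w : Fin n → E, sSup ((fun ω => Real.exp (birk φ n ω)) '' cylW w)) / n) atTop

/-- Kolmogorov–Sinai entropy of a shift-invariant measure on the full shift,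
computed along the canonical generating partition into cylinders
(the limit exists; we use `limsup` as the defining expression). -/
noncomputable def ent [Fintype E] [MeasurableSpace E] (μ : Measure (Conf E)) : ℝ :=
  Filter.limsup (fun n : ℕ =>
    (- ∑ w : Fin n → E, ((μ (cylW w)).toReal * Real.log (μ (cylW w)).toReal)) / n) atTop

/-- Shift invariance of a measure. -/
def ShiftInv [MeasurableSpace E] (μ : Measure (Conf E)) : Prop :=
  Measure.map (shiftZ 1) μ = μ

/-- `μ` is an equilibrium state for `φ`: `μ` is a shift-invariant Borel probability
measure with `h(μ) + ∫ φ dμ = P(φ)`. -/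
def IsEquilibrium [Fintype E] [MeasurableSpace E] (φ : Conf E → ℝ)
    (μ : Measure (Conf E)) : Prop :=
  IsProbabilityMeasure μ ∧ ShiftInv μ ∧ ent μ + ∫ ω, φ ω ∂μ = press φ

/-- `ω^c`: the configuration equal to `c` at site `0` and to `ω` elsewhere. -/
def upd0 (ω : Conf E) (c : E) : Conf E := Function.update ω 0 c

/-- Partial sums `ρ_n(ξ,η) = ∑_{i=-n}^{n} (φ(S^i ξ) - φ(S^i η))`. -/
noncomputable def rhoN (φ : Conf E → ℝ) (ξ η : Conf E) (n : ℕ) : ℝ :=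
  ∑ i ∈ Finset.Icc (-(n : ℤ)) (n : ℤ), (φ (shiftZ i ξ) - φ (shiftZ i η))

/-- `φ` has the extensibility property: for all `a b ∈ E`, the functions
`ω ↦ ∑_{i=-n}^{n} (φ(S^i(ω^b)) - φ(S^i(ω^a)))` converge uniformly as `n → ∞`. -/
def Extensible (φ : Conf E → ℝ) : Prop :=
  ∀ a b : E, ∃ r : Conf E → ℝ,
    TendstoUniformly (fun n ω => rhoN φ (upd0 ω b) (upd0 ω a) n) r atTop

/-- The cocycle `ρ^φ(ξ,η) = lim_n ∑_{i=-n}^{n} (φ(S^i ξ) - φ(S^i η))`. -/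
noncomputable def rho (φ : Conf E → ℝ) (ξ η : Conf E) : ℝ :=
  limUnder atTop (rhoN φ ξ η)

/-- `ξ` and `η` differ in at most finitely many coordinates. -/
def FinDiff (ξ η : Conf E) : Prop := {k : ℤ | ξ k ≠ η k}.Finite

/-- `ovr Λ ξ ω` is the configuration `ξ_Λ ω_{ℤ∖Λ}`, equal to `ξ` on `Λ` and to `ω` off `Λ`. -/
def ovr (Λ : Finset ℤ) (ξ : {k // k ∈ Λ} → E) (ω : Conf E) : Conf E :=
  fun k => if h : k ∈ Λ then ξ ⟨k, h⟩ else ω k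

/-- `γ` is a specification: each `γ_Λ(·|ω_{Λ^c})` is a probability distribution on `E^Λ`,
and the family is consistent (`γ_Λ = γ_Λ ∘ γ_V` for `V ⊆ Λ`); here `γ Λ ω` denotes
`γ_Λ(ω_Λ | ω_{Λ^c})`. -/
def IsSpecification [Fintype E] (γ : Finset ℤ → Conf E → ℝ) : Prop :=
  (∀ (Λ : Finset ℤ) (ω : Conf E), 0 ≤ γ Λ ω) ∧
  (∀ (Λ : Finset ℤ) (ω : Conf E), ∑ ξ : {k // k ∈ Λ} → E, γ Λ (ovr Λ ξ ω) = 1) ∧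
  (∀ V Λ : Finset ℤ, V ⊆ Λ → ∀ ω : Conf E,
     γ Λ ω = (∑ η : {k // k ∈ V} → E, γ Λ (ovr V η ω)) * γ V ω)

/-- Non-nullness: `inf_ω γ_Λ(ω_Λ|ω_{Λ^c}) > 0` for every finite `Λ`. -/
def NonNull (γ : Finset ℤ → Conf E → ℝ) : Prop :=
  ∀ Λ : Finset ℤ, ∃ c > (0 : ℝ), ∀ ω : Conf E, c ≤ γ Λ ω

/-- Continuity (quasilocality): `ω ↦ γ_Λ(ω_Λ|ω_{Λ^c})` is continuous for every finite `Λ`. -/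
def ContSpec [TopologicalSpace E] (γ : Finset ℤ → Conf E → ℝ) : Prop :=
  ∀ Λ : Finset ℤ, Continuous (γ Λ)

/-- A Gibbsian specification: a non-null continuous specification. -/
def IsGibbsSpec [Fintype E] [TopologicalSpace E] (γ : Finset ℤ → Conf E → ℝ) : Prop :=
  IsSpecification γ ∧ NonNull γ ∧ ContSpec γ

/-- Translation invariance of a specification: `γ_{Λ+1} = γ_Λ ∘ S`. -/
def SpecTI (γ : Finset ℤ → Conf E → ℝ) : Prop :=
  ∀ (Λ : Finset ℤ) (ω : Conf E), γ (Λ.image (· + 1)) ω = γ Λ (shiftZ 1 ω)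

/-- `μ` is a DLR-Gibbs measure for the specification `γ`: `μ` is a Borel probability
measure satisfying the DLR equations `∫ γ_Λ(f|·) dμ = ∫ f dμ` for every finite `Λ`
and every continuous `f` (equivalently, each `γ_Λ` is a version of the conditional
probabilities of `μ`). -/
def IsDLRGibbs [Fintype E] [MeasurableSpace E] [TopologicalSpace E]
    (γ : Finset ℤ → Conf E → ℝ) (μ : Measure (Conf E)) : Prop :=
  IsProbabilityMeasure μ ∧
  ∀ (Λ : Finset ℤ) (f : Conf E → ℝ), Continuous f →
    ∫ ω, (∑ ξ : {k // k ∈ Λ} → E, γ Λ (ovr Λ ξ ω) * f (ovr Λ ξ ω)) ∂μ = ∫ ω, f ω ∂μ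

/-- The specification `γ^φ` associated with an extensible potential `φ`:
`γ^φ_Λ(ω_Λ|ω_{Λ^c}) = (∑_{ξ_Λ ∈ E^Λ} exp ρ^φ(ξ_Λ ω_{ℤ∖Λ}, ω))⁻¹`. -/
noncomputable def specOf [Fintype E] (φ : Conf E → ℝ) : Finset ℤ → Conf E → ℝ :=
  fun Λ ω => (∑ ξ : {k // k ∈ Λ} → E, Real.exp (rho φ (ovr Λ ξ ω) ω))⁻¹

/-- The configuration `𝐚_{-∞}^{-1} b ω_1^{∞}`: equal to `a` at all negative
coordinates, to `b` at coordinate `0`, and to `ω` at positive coordinates. -/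
def bca (a : E) (ω : Conf E) (b : E) : Conf E :=
  fun k => if k < 0 then a else if k = 0 then b else ω k

/-- The potential associated with a specification:
`φ_γ(ω) = log (γ_{{0}}(ω_0 | 𝐚_{-∞}^{-1} ω_1^{∞}) / γ_{{0}}(a | 𝐚_{-∞}^{-1} ω_1^{∞}))`. -/
noncomputable def phiOf (γ : Finset ℤ → Conf E → ℝ) (a : E) (ω : Conf E) : ℝ :=
  Real.log (γ ({0} : Finset ℤ) (bca a ω (ω 0)) / γ ({0} : Finset ℤ) (bca a ω a))

/-- `μ` is weak Bowen-Gibbs for `φ` with constant `P`. -/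
def WeakBowenGibbs [MeasurableSpace E] (μ : Measure (Conf E)) (φ : Conf E → ℝ)
    (P : ℝ) : Prop :=
  ∃ C : ℕ → ℝ, (∀ n, 0 < C n) ∧
    Tendsto (fun n : ℕ => Real.log (C n) / n) atTop (𝓝 0) ∧
    ∀ (n : ℕ) (ω : Conf E),
      (C n)⁻¹ ≤ (μ (cylPt ω n)).toReal / Real.exp (birk φ n ω - n * P) ∧
      (μ (cylPt ω n)).toReal / Real.exp (birk φ n ω - n * P) ≤ C n

/-!
Write `ω̄ := 𝐚_{-∞}^{-1} a ω_1^∞`, so that `ω̄^{ω_0} = 𝐚_{-∞}^{-1} ω_0^∞`. Since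
`γ^φ_{{0}}(b | ω̄) ∝ exp ρ^φ(ω̄^b, ω̄)` and `ρ^φ` is additive along configurations differing only at
`0`, the normalisations cancel and `φ_{γ^φ}(ω) = ρ^φ(ω̄^{ω_0}, ω̄)`, the uniform limit of
`ρ_n(ω) = ∑_{|i| ≤ n} φ(S^i ω̄^{ω_0}) - φ(S^i ω̄)`. As `S ω̄ = 𝐚_{-∞}^{-1} (Sω)_0^∞`, shift invariance
of `τ` gives `∫ φ(S^i ω̄^{ω_0}) dτ = A(i+1)` with `A(i) = ∫ φ(S^i ω̄) dτ`, so `∫ ρ_n dτ` telescopes to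
`A(n+1) - A(-n)`. By dominated convergence `A(n+1) → ∫ φ dτ`, the `a`-prefix being pushed off to
`-∞`, and `A(-n) → φ(𝐚)`.
-/

end GP

section

open Filter Topology MeasureTheory

lemma tendstoUniformly_uncurry_of_finite {ι κ α β : Type*} [Finite κ] [UniformSpace β]
    {p : Filter ι} {F : ι → κ → α → β} {f : κ → α → β}
    (h : ∀ k, TendstoUniformly (fun n => F n k) (f k) p) :
    TendstoUniformly (fun n (x : κ × α) => F n x.1 x.2) (fun x => f x.1 x.2) p :=
  fun u hu => (eventually_all.2 fun k => h k u hu).mono fun _ hn x => hn x.1 x.2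

lemma Continuous.integrable_of_compactSpace {X : Type*} [TopologicalSpace X] [CompactSpace X]
    [MeasurableSpace X] [OpensMeasurableSpace X] {μ : Measure X} [IsFiniteMeasure μ]
    {g : X → ℝ} (hg : Continuous g) : Integrable g μ :=
  hg.integrable_of_hasCompactSupport (.of_compactSpace g)

lemma TendstoUniformly.tendsto_integral_of_continuous {ι X : Type*} [TopologicalSpace X]
    [CompactSpace X] [MeasurableSpace X] [OpensMeasurableSpace X] {μ : Measure X}
    [IsFiniteMeasure μ] {l : Filter ι} [l.IsCountablyGenerated] {F : ι → X → ℝ} {f : X → ℝ}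
    (hF : ∀ᶠ i in l, Continuous (F i)) (h : TendstoUniformly F f l) :
    Tendsto (fun i => ∫ x, F i x ∂μ) l (𝓝 (∫ x, f x ∂μ)) := by
  rcases l.eq_or_neBot with rfl | hl
  · simp
  obtain ⟨C, hC⟩ := (h.continuous hF.frequently).bounded_above_of_compact_support
    (.of_compactSpace f)
  refine tendsto_integral_filter_of_dominated_convergence (fun _ => C + 1)
    (hF.mono fun i hi => hi.aestronglyMeasurable) ?_ (integrable_const _)
    (ae_of_all _ h.tendsto_at)
  filter_upwards [Metric.tendstoUniformly_iff.1 h 1 one_pos] with i hi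
  refine ae_of_all _ fun x => ?_
  have := norm_le_norm_add_norm_sub' (F i x) (f x)
  rw [← dist_eq_norm_sub'] at this
  linarith [hC x, hi x]

lemma tendsto_integral_comp_of_tendsto {X Y : Type*} [TopologicalSpace X] [CompactSpace X]
    [MeasurableSpace X] [OpensMeasurableSpace X] [MeasurableSpace Y] {μ : Measure Y}
    [IsFiniteMeasure μ] {φ : X → ℝ} (hφ : Continuous φ) {F : ℕ → Y → X} {G : Y → X}
    (hF : ∀ n, Measurable (F n)) (h : ∀ y, Tendsto (fun n => F n y) atTop (𝓝 (G y))) :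
    Tendsto (fun n => ∫ y, φ (F n y) ∂μ) atTop (𝓝 (∫ y, φ (G y) ∂μ)) := by
  obtain ⟨C, hC⟩ := hφ.bounded_above_of_compact_support (.of_compactSpace φ)
  exact tendsto_integral_of_dominated_convergence (fun _ => C)
    (fun n => (hφ.measurable.comp (hF n)).aestronglyMeasurable) (integrable_const C)
    (fun n => ae_of_all _ fun y => hC _) (ae_of_all _ fun y => (hφ.tendsto _).comp (h y))

theorem Int.sum_Ico_sub {M : Type*} [AddCommGroup M] (A : ℤ → M) {m n : ℤ} (h : m ≤ n) :
    ∑ i ∈ Finset.Ico m n, (A (i + 1) - A i) = A n - A m := by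
  induction n, h using Int.leInduction with
  | base => simp
  | succ n hmn ih =>
    rw [← Finset.insert_Ico_right_eq_Ico_add_one hmn, Finset.sum_insert (by simp), ih]
    abel

end

namespace GP

variable {E : Type*}

lemma shiftZ_shiftZ (i j : ℤ) (ω : Conf E) : shiftZ i (shiftZ j ω) = shiftZ (i + j) ω :=
  funext fun k => congrArg ω (add_assoc k i j)

lemma shiftZ_zero (ω : Conf E) : shiftZ 0 ω = ω :=
  funext fun k => congrArg ω (add_zero k)

lemma iterate_shiftZ_one (m : ℕ) : (shiftZ (E := E) 1)^[m] = shiftZ m := by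
  induction m with
  | zero => exact funext fun ω => (shiftZ_zero ω).symm
  | succ m ih =>
    funext ω
    rw [Function.iterate_succ_apply', ih, shiftZ_shiftZ, add_comm]
    norm_cast

lemma measurable_shiftZ [MeasurableSpace E] (i : ℤ) : Measurable (shiftZ (E := E) i) :=
  measurable_pi_lambda _ fun k => measurable_pi_apply (k + i)

lemma continuous_shiftZ [TopologicalSpace E] (i : ℤ) : Continuous (shiftZ (E := E) i) :=
  continuous_pi fun k => continuous_apply (k + i)

lemma upd0_upd0 (ω : Conf E) (b c : E) : upd0 (upd0 ω b) c = upd0 ω c :=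
  Function.update_idem ..

lemma upd0_bca (a b c : E) (ω : Conf E) : upd0 (bca a ω b) c = bca a ω c := by
  funext k
  by_cases hk : k = 0
  · subst hk; simp [upd0, bca]
  · simp [upd0, bca, hk]

lemma shiftZ_one_bca (a : E) (ω : Conf E) :
    shiftZ 1 (bca a ω a) = bca a (shiftZ 1 ω) (shiftZ 1 ω 0) := by
  funext k
  simp only [bca, shiftZ]
  split_ifs <;> first | rfl | omega | (congr 1; omega)

lemma continuous_bca [TopologicalSpace E] {X : Type*} [TopologicalSpace X] (a : E)
    {f : X → Conf E} {g : X → E} (hf : Continuous f) (hg : Continuous g) :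
    Continuous fun x => bca a (f x) (g x) :=
  continuous_pi fun k => by
    simp only [bca]
    split_ifs
    exacts [continuous_const, hg, (continuous_apply k).comp hf]

lemma ovr_singleton_zero (ξ : {k // k ∈ ({0} : Finset ℤ)} → E) (ω : Conf E) :
    ovr {0} ξ ω = upd0 ω (ξ default) := by
  funext k
  by_cases hk : k = 0
  · subst hk
    simp only [ovr, Finset.mem_singleton, ↓reduceDIte, upd0, Function.update_self]
    rfl
  · simp [ovr, upd0, hk]

lemma tendsto_of_forall_eventually_apply_eq [TopologicalSpace E] {ι : Type*} {l : Filter ι}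
    {F : ι → Conf E} {ω : Conf E} (h : ∀ k, ∀ᶠ n in l, F n k = ω k) : Tendsto F l (𝓝 ω) :=
  tendsto_pi_nhds.2 fun k => tendsto_const_nhds.congr' ((h k).mono fun _ hn => hn.symm)

lemma rhoN_add (φ : Conf E → ℝ) (ξ η ζ : Conf E) (n : ℕ) :
    rhoN φ ξ ζ n = rhoN φ ξ η n + rhoN φ η ζ n := by
  simp only [rhoN, ← Finset.sum_add_distrib, sub_add_sub_cancel]

lemma continuous_rhoN [TopologicalSpace E] {X : Type*} [TopologicalSpace X] {φ : Conf E → ℝ}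
    (hφ : Continuous φ) {f g : X → Conf E} (hf : Continuous f) (hg : Continuous g) (n : ℕ) :
    Continuous fun x => rhoN φ (f x) (g x) n :=
  continuous_finsetSum _ fun i _ =>
    (hφ.comp ((continuous_shiftZ i).comp hf)).sub (hφ.comp ((continuous_shiftZ i).comp hg))

lemma rho_eq_add_of_tendsto {φ : Conf E → ℝ} {ξ η ζ : Conf E}
    (hξη : Tendsto (rhoN φ ξ η) atTop (𝓝 (rho φ ξ η)))
    (hηζ : Tendsto (rhoN φ η ζ) atTop (𝓝 (rho φ η ζ))) :
    rho φ ξ ζ = rho φ ξ η + rho φ η ζ :=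
  ((hξη.add hηζ).congr fun n => (rhoN_add φ ξ η ζ n).symm).limUnder_eq

lemma Extensible.tendstoUniformly_rhoN_upd0 {φ : Conf E → ℝ} (hφ : Extensible φ) (a b : E) :
    TendstoUniformly (fun n ω => rhoN φ (upd0 ω b) (upd0 ω a) n)
      (fun ω => rho φ (upd0 ω b) (upd0 ω a)) atTop := by
  obtain ⟨r, hr⟩ := hφ a b
  have hr_eq : r = fun ω => rho φ (upd0 ω b) (upd0 ω a) :=
    funext fun ω => (hr.tendsto_at ω).limUnder_eq.symm
  exact hr_eq ▸ hr

lemma Extensible.rho_upd0_eq_add {φ : Conf E → ℝ} (hφ : Extensible φ) (ω : Conf E) (a b c : E) :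
    rho φ (upd0 ω c) (upd0 ω a) = rho φ (upd0 ω c) (upd0 ω b) + rho φ (upd0 ω b) (upd0 ω a) :=
  rho_eq_add_of_tendsto ((hφ.tendstoUniformly_rhoN_upd0 b c).tendsto_at ω)
    ((hφ.tendstoUniformly_rhoN_upd0 a b).tendsto_at ω)

section Finite

variable [Fintype E]

lemma specOf_singleton_zero (φ : Conf E → ℝ) (ω : Conf E) :
    specOf φ {0} ω = (∑ c : E, Real.exp (rho φ (upd0 ω c) ω))⁻¹ := by
  unfold specOf
  congr 1
  exact Fintype.sum_equiv (Equiv.funUnique _ E) _ _ fun ξ => by rw [ovr_singleton_zero]; rfl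

lemma Extensible.log_specOf_singleton_div {φ : Conf E → ℝ} (hφ : Extensible φ) (ω : Conf E)
    (a b : E) :
    Real.log (specOf φ {0} (upd0 ω b) / specOf φ {0} (upd0 ω a)) =
      rho φ (upd0 ω b) (upd0 ω a) := by
  have : Nonempty E := ⟨a⟩
  set Z := ∑ c : E, Real.exp (rho φ (upd0 ω c) (upd0 ω b))
  have hZ : 0 < Z := Finset.sum_pos (fun c _ => Real.exp_pos _) Finset.univ_nonempty
  have hsplit : ∑ c : E, Real.exp (rho φ (upd0 ω c) (upd0 ω a)) =
      Real.exp (rho φ (upd0 ω b) (upd0 ω a)) * Z := by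
    rw [Finset.mul_sum]
    exact Finset.sum_congr rfl fun c _ => by
      rw [← Real.exp_add, hφ.rho_upd0_eq_add ω a b c, add_comm]
  simp only [specOf_singleton_zero, upd0_upd0]
  rw [hsplit, inv_div_inv, mul_div_cancel_right₀ _ hZ.ne', Real.log_exp]

lemma Extensible.phiOf_specOf_eq_rho {φ : Conf E → ℝ} (hφ : Extensible φ) (a : E) (ω : Conf E) :
    phiOf (specOf φ) a ω = rho φ (bca a ω (ω 0)) (bca a ω a) := by
  simpa only [phiOf, upd0_bca] using hφ.log_specOf_singleton_div (bca a ω a) a (ω 0)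

lemma Extensible.tendstoUniformly_rhoN_bca {φ : Conf E → ℝ} (hφ : Extensible φ) (a : E) :
    TendstoUniformly (fun n ω => rhoN φ (bca a ω (ω 0)) (bca a ω a) n)
      (phiOf (specOf φ) a) atTop := by
  have h := (tendstoUniformly_uncurry_of_finite fun b => hφ.tendstoUniformly_rhoN_upd0 a b).comp
    fun ω : Conf E => (ω 0, bca a ω a)
  simp only [Function.comp_def, upd0_bca] at h
  convert h using 1
  exact funext (hφ.phiOf_specOf_eq_rho a)

end Finite

lemma ShiftInv.integral_comp_shiftZ_natCast [MeasurableSpace E] {τ : Measure (Conf E)}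
    (hτ : ShiftInv τ) (m : ℕ) {g : Conf E → ℝ} (hg : AEStronglyMeasurable g τ) :
    ∫ ω, g (shiftZ m ω) ∂τ = ∫ ω, g ω ∂τ := by
  have hm : MeasurePreserving (shiftZ (m : ℤ)) τ τ :=
    iterate_shiftZ_one (E := E) m ▸ (MeasurePreserving.mk (measurable_shiftZ 1) hτ).iterate m
  rw [← integral_map hm.measurable.aemeasurable (by rwa [hm.map_eq]), hm.map_eq]

section Integration

variable [Fintype E] [TopologicalSpace E] [DiscreteTopology E] [MeasurableSpace E]
  [MeasurableSingletonClass E] {φ : Conf E → ℝ} {τ : Measure (Conf E)}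

lemma integral_rhoN_bca (hφ : Continuous φ) [IsFiniteMeasure τ] (hτ : ShiftInv τ) (a : E)
    (n : ℕ) :
    ∫ ω, rhoN φ (bca a ω (ω 0)) (bca a ω a) n ∂τ =
      ∫ ω, φ (shiftZ (n + 1) (bca a ω a)) ∂τ - ∫ ω, φ (shiftZ (-n) (bca a ω a)) ∂τ := by
  set A : ℤ → ℝ := fun i => ∫ ω, φ (shiftZ i (bca a ω a)) ∂τ
  have hcont : ∀ i (g : Conf E → E), Continuous g →
      Continuous fun ω => φ (shiftZ i (bca a ω (g ω))) := fun i g hg =>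
    hφ.comp ((continuous_shiftZ i).comp (continuous_bca a continuous_id hg))
  have hstep : ∀ i, ∫ ω, φ (shiftZ i (bca a ω (ω 0))) ∂τ = A (i + 1) := fun i => by
    rw [← hτ.integral_comp_shiftZ_natCast 1 (hcont i _ (continuous_apply 0)).aestronglyMeasurable]
    simp only [Nat.cast_one, ← shiftZ_one_bca, shiftZ_shiftZ, A]
  calc ∫ ω, rhoN φ (bca a ω (ω 0)) (bca a ω a) n ∂τ
      = ∑ i ∈ Finset.Icc (-(n : ℤ)) n,
          (∫ ω, φ (shiftZ i (bca a ω (ω 0))) ∂τ - A i) := by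
        have hint : ∀ i (g : Conf E → E), Continuous g →
            Integrable (fun ω => φ (shiftZ i (bca a ω (g ω)))) τ := fun i g hg =>
          (hcont i g hg).integrable_of_compactSpace
        have hint_sub : ∀ i, Integrable (fun ω =>
            φ (shiftZ i (bca a ω (ω 0))) - φ (shiftZ i (bca a ω a))) τ := fun i =>
          (hint i _ (continuous_apply 0)).sub (hint i _ continuous_const)
        simp only [rhoN, A]
        rw [integral_finsetSum _ fun i _ => hint_sub i]
        exact Finset.sum_congr rfl fun i _ =>
          integral_sub (hint i _ (continuous_apply 0)) (hint i _ continuous_const)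
    _ = A (n + 1) - A (-n) := by
        simp only [hstep]
        rw [← Finset.Ico_add_one_right_eq_Icc, Int.sum_Ico_sub A (by omega)]

lemma tendsto_integral_shiftZ_neg_bca (hφ : Continuous φ) [IsProbabilityMeasure τ] (a : E) :
    Tendsto (fun n : ℕ => ∫ ω, φ (shiftZ (-n) (bca a ω a)) ∂τ) atTop (𝓝 (φ fun _ => a)) := by
  have h := tendsto_integral_comp_of_tendsto (μ := τ) hφ (G := fun _ _ => a)
    (fun n => ((continuous_shiftZ (-n)).comp
      (continuous_bca a continuous_id continuous_const)).measurable)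
    fun ω => tendsto_of_forall_eventually_apply_eq fun k =>
      eventually_atTop.2 ⟨k.toNat, fun n hn => by
        simp only [Function.comp_apply, shiftZ, bca]
        split_ifs <;> first | rfl | omega⟩
  simpa using h

lemma tendsto_integral_shiftZ_add_one_bca (hφ : Continuous φ) [IsFiniteMeasure τ]
    (hτ : ShiftInv τ) (a : E) :
    Tendsto (fun n : ℕ => ∫ ω, φ (shiftZ (n + 1) (bca a ω a)) ∂τ) atTop
      (𝓝 (∫ ω, φ ω ∂τ)) := by
  -- `S^{n+1}` of the configuration `bca a ω a` is `T n (S^{n+1} ω)`, where `T n` overwrites all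
  -- coordinates `≤ -(n+1)` by `a`; as `n → ∞` these `T n` converge pointwise to the identity.
  let T : ℕ → Conf E → Conf E := fun n ω => shiftZ (n + 1) (bca a (shiftZ (-(n + 1)) ω) a)
  have hTcont : ∀ n, Continuous (T n) := fun n => (continuous_shiftZ _).comp
    (continuous_bca a (continuous_shiftZ _) continuous_const)
  have hT : ∀ n : ℕ, ∫ ω, φ (shiftZ (n + 1) (bca a ω a)) ∂τ = ∫ ω, φ (T n ω) ∂τ := fun n => by
    rw [← hτ.integral_comp_shiftZ_natCast (n + 1) (g := fun ω => φ (T n ω))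
      (hφ.comp (hTcont n)).aestronglyMeasurable]
    simp [T, shiftZ_shiftZ, shiftZ_zero]
  simp only [hT]
  refine tendsto_integral_comp_of_tendsto hφ (fun n => (hTcont n).measurable) fun ω =>
    tendsto_of_forall_eventually_apply_eq fun k => eventually_atTop.2 ⟨(-k).toNat, fun n hn => ?_⟩
  simp only [T, shiftZ, bca]
  rw [if_neg (by omega), if_neg (by omega)]
  congr 1
  omega

end Integration

theorem phiOf_specOf_weakly_cohomologous_general [Fintype E] [TopologicalSpace E] [DiscreteTopology E]
    [MeasurableSpace E] [MeasurableSingletonClass E]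
    (φ : Conf E → ℝ) (hφc : Continuous φ) (hφe : Extensible φ) (a : E)
    (τ : Measure (Conf E)) (hτp : IsProbabilityMeasure τ) (hτi : ShiftInv τ) :
    ∫ ω, phiOf (specOf φ) a ω ∂τ = (∫ ω, φ ω ∂τ) - φ (fun _ => a) := by
  have hphi : Tendsto (fun n : ℕ => ∫ ω, rhoN φ (bca a ω (ω 0)) (bca a ω a) n ∂τ) atTop
      (𝓝 (∫ ω, phiOf (specOf φ) a ω ∂τ)) :=
    (hφe.tendstoUniformly_rhoN_bca a).tendsto_integral_of_continuous (.of_forall fun n =>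
      continuous_rhoN hφc (continuous_bca a continuous_id (continuous_apply 0))
        (continuous_bca a continuous_id continuous_const) n)
  have htelescope : Tendsto (fun n : ℕ => ∫ ω, rhoN φ (bca a ω (ω 0)) (bca a ω a) n ∂τ) atTop
      (𝓝 ((∫ ω, φ ω ∂τ) - φ (fun _ => a))) := by
    simp only [integral_rhoN_bca hφc hτi a]
    exact (tendsto_integral_shiftZ_add_one_bca hφc hτi a).sub
      (tendsto_integral_shiftZ_neg_bca hφc a)
  exact tendsto_nhds_unique hphi htelescope

/-- For `φ` continuous with the extensibility property, the potential
`φ_{γ^φ}` is weakly cohomologous to `φ`: for every shift-invariant Borel probability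
measure `τ`, `∫ φ_{γ^φ} dτ = ∫ φ dτ - φ(𝐚)`. -/
theorem phiOf_specOf_weakly_cohomologous [Fintype E] [Nonempty E] [TopologicalSpace E] [DiscreteTopology E]
    [MeasurableSpace E] [MeasurableSingletonClass E]
    (φ : Conf E → ℝ) (hφc : Continuous φ) (hφe : Extensible φ) (a : E)
    (τ : Measure (Conf E)) (hτp : IsProbabilityMeasure τ) (hτi : ShiftInv τ) :
    ∫ ω, phiOf (specOf φ) a ω ∂τ = (∫ ω, φ ω ∂τ) - φ (fun _ => a) :=
  phiOf_specOf_weakly_cohomologous_general φ hφc hφe a τ hτp hτi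

end GP
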